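/- arXiv:2402.14567 — 4 statements merged into one kernel-verified Lean document; each statement's English description precedes it below -/
import Mathlib

section
/- For every time t and all μOPs q ≤ q', if q and q' are both in-flight at time t, then q' − q < R. (Paper's Lemma 'Distance of in-flight μOPs': two simultaneously in-flight μOPs are fewer than R positions apart in decode order.) -/
def InFlight (decode retire : ℕ → ℕ) (t q : ℕ) : Prop :=
  decode q ≤ t ∧ t < retire q

-- `q + R` is decoded only after `q` retires, hence after every μOP in flight with `q`.
theorem lt_add_of_inFlight {decode retire : ℕ → ℕ} {R t q q' : ℕ}
    (h_dec_mono : Monotone decode) (h_cap : retire q ≤ decode (q + R))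
    (hq : InFlight decode retire t q) (hq' : InFlight decode retire t q') : q' < q + R :=
  h_dec_mono.reflect_lt <| calc
    decode q' ≤ t := hq'.1
    _ < retire q := hq.2
    _ ≤ decode (q + R) := h_cap

theorem inflight_distance_lt_rob_size_general
    (R : ℕ)
    (decode retire : ℕ → ℕ)
    (h_dec_mono : ∀ q q', q ≤ q' → decode q ≤ decode q')
    (h_cap : ∀ q, retire q ≤ decode (q + R))
    (t q q' : ℕ)
    (h_inflight_q : decode q ≤ t ∧ t < retire q)
    (h_inflight_q' : decode q' ≤ t ∧ t < retire q') :
    q' - q < R := by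
  have hmono : Monotone decode := fun a b hab => h_dec_mono a b hab
  have hq' : q' < q + R := lt_add_of_inFlight hmono (h_cap q) h_inflight_q h_inflight_q'
  -- `q` itself is in flight, so `R > 0`; this covers the case `q' < q`.
  have hq : q < q + R := lt_add_of_inFlight hmono (h_cap q) h_inflight_q h_inflight_q
  omega

/-- Paper's Lemma "Distance of in-flight μOPs": in a reorder buffer of
capacity `R ≥ 1`, with `decode` and `retire` times satisfying the ROB axioms,
two μOPs `q ≤ q'` that are both in-flight at a common time `t`
(`decode _ ≤ t < retire _`) are fewer than `R` positions apart. -/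
theorem inflight_distance_lt_rob_size
    (R : ℕ) (hR : 1 ≤ R)
    (decode retire : ℕ → ℕ)
    (h_dec_ret : ∀ q, decode q < retire q)
    (h_ret_mono : ∀ q q', q ≤ q' → retire q ≤ retire q')
    (h_dec_mono : ∀ q q', q ≤ q' → decode q ≤ decode q')
    (h_cap : ∀ q, retire q ≤ decode (q + R))
    (t q q' : ℕ) (hqq' : q ≤ q')
    (h_inflight_q : decode q ≤ t ∧ t < retire q)
    (h_inflight_q' : decode q' ≤ t ∧ t < retire q') :
    q' - q < R :=
  inflight_distance_lt_rob_size_general R decode retire h_dec_mono h_cap t q q' h_inflight_q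
    h_inflight_q'
end

section
/- Let h : ℕ → ℕ be strictly monotone (assigning to each executed instruction the index of one of its decoded μOPs, injectively and in increasing order). For all instructions p ≤ p' and every time t, if the μOPs h p and h p' are both in-flight at time t, then p' − p < R: two instructions with simultaneously in-flight μOPs are fewer than R instructions apart. (Instruction-level form of the paper's Lemma 'Distance of in-flight μOPs'.) -/
/-! If μOP `q` is still in flight when `q'` has been decoded, then `q'` was decoded no later than
`q + R`, whose decoding already required `q` to retire; so `q' < q + R`. A strictly monotone `h`
spreads instructions `p ≤ p'` at least `p' - p` μOPs apart, hence `p' - p < R`. -/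

theorem lt_add_of_decode_le_of_lt_retire {R : ℕ} {decode retire : ℕ → ℕ}
    (h_dec_mono : Monotone decode) (h_cap : ∀ q, retire q ≤ decode (q + R))
    {q q' t : ℕ} (h_decoded : decode q' ≤ t) (h_not_retired : t < retire q) :
    q' < q + R := by
  by_contra! h_far
  have h_retired : retire q ≤ t :=
    calc retire q ≤ decode (q + R) := h_cap q
      _ ≤ decode q' := h_dec_mono h_far
      _ ≤ t := h_decoded
  omega

theorem instruction_inflight_distance_lt_rob_size_general
    (R : ℕ)
    (decode retire : ℕ → ℕ)
    (h_dec_mono : ∀ q q', q ≤ q' → decode q ≤ decode q')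
    (h_cap : ∀ q, retire q ≤ decode (q + R))
    (h : ℕ → ℕ) (h_mono : StrictMono h)
    (p p' t : ℕ) (hpp' : p ≤ p')
    (h_inflight_p : decode (h p) ≤ t ∧ t < retire (h p))
    (h_inflight_p' : decode (h p') ≤ t ∧ t < retire (h p')) :
    p' - p < R := by
  have h_uop_close : h p' < h p + R :=
    lt_add_of_decode_le_of_lt_retire (fun _ _ => h_dec_mono _ _) h_cap
      h_inflight_p'.1 h_inflight_p.2
  have h_uop_spread : p' - p + h p ≤ h p' := by
    simpa [Nat.sub_add_cancel hpp'] using h_mono.add_le_nat (p' - p) p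
  omega

/-- Instruction-level form of the paper's Lemma "Distance of in-flight μOPs":
with `h : ℕ → ℕ` strictly monotone mapping each executed instruction to one of
its decoded μOPs, if the μOPs `h p` and `h p'` (with `p ≤ p'`) are both
in-flight at a common time `t`, then the instructions are fewer than `R`
instructions apart: `p' - p < R`. -/
theorem instruction_inflight_distance_lt_rob_size
    (R : ℕ) (hR : 1 ≤ R)
    (decode retire : ℕ → ℕ)
    (h_dec_ret : ∀ q, decode q < retire q)
    (h_ret_mono : ∀ q q', q ≤ q' → retire q ≤ retire q')
    (h_dec_mono : ∀ q q', q ≤ q' → decode q ≤ decode q')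
    (h_cap : ∀ q, retire q ≤ decode (q + R))
    (h : ℕ → ℕ) (h_mono : StrictMono h)
    (p p' t : ℕ) (hpp' : p ≤ p')
    (h_inflight_p : decode (h p) ≤ t ∧ t < retire (h p))
    (h_inflight_p' : decode (h p') ≤ t ∧ t < retire (h p')) :
    p' - p < R :=
  instruction_inflight_distance_lt_rob_size_general R decode retire h_dec_mono h_cap h h_mono p p' t
    hpp' h_inflight_p h_inflight_p'
end

section
/- Suppose the issue of μOP q is delayed at time t only if (1) q is not yet decoded at t (t < decode q), or (2) some μOP q₀ with dep q₀ q is not yet retired at t (t < retire q₀), or (3) no suitable execution port for q is free at t. Then for every μOP q and time t, if decode q ≤ t, a suitable port for q is free at time t, and every μOP q₀ with dep q₀ q satisfies q₀ + R ≤ q, the issue of q is not delayed at time t. (Paper's Theorem 'Long distance dependencies': a dependency between two instructions separated by at least R μOPs can be ignored.) -/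
theorem retire_le_decode_of_add_le {R : ℕ} {decode retire : ℕ → ℕ} (h_dec_mono : Monotone decode)
    (h_cap : ∀ q, retire q ≤ decode (q + R)) {q₀ q : ℕ} (h : q₀ + R ≤ q) :
    retire q₀ ≤ decode q :=
  (h_cap q₀).trans (h_dec_mono h)

theorem long_distance_dependencies_no_delay_general
    (R : ℕ)
    (decode retire : ℕ → ℕ)
    (h_dec_mono : ∀ q q', q ≤ q' → decode q ≤ decode q')
    (h_cap : ∀ q, retire q ≤ decode (q + R))
    (dep : ℕ → ℕ → Prop)
    (portFree : ℕ → ℕ → Prop)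
    (delayed : ℕ → ℕ → Prop)
    (h_delay_law : ∀ t q, delayed t q →
      t < decode q ∨ (∃ q₀, dep q₀ q ∧ t < retire q₀) ∨ ¬ portFree t q)
    (q t : ℕ)
    (h_decoded : decode q ≤ t)
    (h_port : portFree t q)
    (h_far : ∀ q₀, dep q₀ q → q₀ + R ≤ q) :
    ¬ delayed t q := by
  intro h_delayed
  rcases h_delay_law t q h_delayed with h_undecoded | ⟨q₀, h_dep, h_unretired⟩ | h_busy
  · exact h_undecoded.not_ge h_decoded
  · have h_retired : retire q₀ ≤ t :=
      (retire_le_decode_of_add_le h_dec_mono h_cap (h_far q₀ h_dep)).trans h_decoded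
    exact h_unretired.not_ge h_retired
  · exact h_busy h_port

/-- Paper's Theorem "Long distance dependencies": under the issue-delay law
(a μOP's issue is delayed only if it is not yet decoded, or it depends on a
not-yet-retired μOP, or no suitable port is free), a μOP `q` that is decoded,
has a free port, and all of whose dependencies reach at least `R` μOPs back,
is not delayed: such long-distance dependencies can be ignored. -/
theorem long_distance_dependencies_no_delay
    (R : ℕ) (hR : 1 ≤ R)
    (decode retire : ℕ → ℕ)
    (h_dec_ret : ∀ q, decode q < retire q)
    (h_ret_mono : ∀ q q', q ≤ q' → retire q ≤ retire q')
    (h_dec_mono : ∀ q q', q ≤ q' → decode q ≤ decode q')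
    (h_cap : ∀ q, retire q ≤ decode (q + R))
    (dep : ℕ → ℕ → Prop)
    (h_dep_lt : ∀ q₀ q, dep q₀ q → q₀ < q)
    (portFree : ℕ → ℕ → Prop)
    (delayed : ℕ → ℕ → Prop)
    (h_delay_law : ∀ t q, delayed t q →
      t < decode q ∨ (∃ q₀, dep q₀ q ∧ t < retire q₀) ∨ ¬ portFree t q)
    (q t : ℕ)
    (h_decoded : decode q ≤ t)
    (h_port : portFree t q)
    (h_far : ∀ q₀, dep q₀ q → q₀ + R ≤ q) :
    ¬ delayed t q :=
  long_distance_dependencies_no_delay_general R decode retire h_dec_mono h_cap dep portFree delayed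
    h_delay_law q t h_decoded h_port h_far
end

section
/- For every time t, the set of μOPs that are in-flight at time t is finite and has cardinality at most R: the reorder buffer never holds more than R μOPs simultaneously. -/
/-!
If `q + R ≤ q'`, then `q'` is decoded no earlier than `q + R`, hence not before `q` retires, so
`q` and `q'` are never in flight together. The μOPs in flight at time `t` therefore lie in a
window of `R` consecutive indices starting at the least of them.
-/

theorem Nat.subset_Ico_sInf_of_forall_lt_add {S : Set ℕ} {R : ℕ}
    (hS : ∀ a ∈ S, ∀ b ∈ S, b < a + R) : S ⊆ Set.Ico (sInf S) (sInf S + R) :=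
  fun b hb => ⟨Nat.sInf_le hb, hS _ (Nat.sInf_mem ⟨b, hb⟩) b hb⟩

theorem Nat.finite_and_ncard_le_of_forall_lt_add {S : Set ℕ} {R : ℕ}
    (hS : ∀ a ∈ S, ∀ b ∈ S, b < a + R) : S.Finite ∧ S.ncard ≤ R := by
  have hsub := Nat.subset_Ico_sInf_of_forall_lt_add hS
  refine ⟨(Set.finite_Ico _ _).subset hsub, ?_⟩
  calc S.ncard ≤ (Set.Ico (sInf S) (sInf S + R)).ncard :=
        Set.ncard_le_ncard hsub (Set.finite_Ico _ _)
    _ = R := by rw [Set.ncard_Ico_nat, Nat.add_sub_cancel_left]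

theorem lt_add_of_inflight {R : ℕ} {decode retire : ℕ → ℕ}
    (h_dec_mono : ∀ q q', q ≤ q' → decode q ≤ decode q')
    (h_cap : ∀ q, retire q ≤ decode (q + R)) {t q q' : ℕ}
    (hq : decode q ≤ t ∧ t < retire q) (hq' : decode q' ≤ t ∧ t < retire q') :
    q' < q + R := by
  by_contra! hle
  have : retire q ≤ decode q' := (h_cap q).trans (h_dec_mono _ _ hle)
  omega

theorem inflight_set_finite_card_le_rob_size_general
    (R : ℕ)
    (decode retire : ℕ → ℕ)
    (h_dec_mono : ∀ q q', q ≤ q' → decode q ≤ decode q')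
    (h_cap : ∀ q, retire q ≤ decode (q + R))
    (t : ℕ) :
    {q : ℕ | decode q ≤ t ∧ t < retire q}.Finite ∧
      {q : ℕ | decode q ≤ t ∧ t < retire q}.ncard ≤ R :=
  Nat.finite_and_ncard_le_of_forall_lt_add fun _ hq _ hq' =>
    lt_add_of_inflight h_dec_mono h_cap hq hq'

/-- In the abstract ROB model of capacity `R ≥ 1`, at every time `t` the set
of μOPs in-flight at `t` (`decode q ≤ t < retire q`) is finite with at most
`R` elements: the reorder buffer never holds more than `R` μOPs at once. -/
theorem inflight_set_finite_card_le_rob_size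
    (R : ℕ) (hR : 1 ≤ R)
    (decode retire : ℕ → ℕ)
    (h_dec_ret : ∀ q, decode q < retire q)
    (h_ret_mono : ∀ q q', q ≤ q' → retire q ≤ retire q')
    (h_dec_mono : ∀ q q', q ≤ q' → decode q ≤ decode q')
    (h_cap : ∀ q, retire q ≤ decode (q + R))
    (t : ℕ) :
    {q : ℕ | decode q ≤ t ∧ t < retire q}.Finite ∧
      {q : ℕ | decode q ≤ t ∧ t < retire q}.ncard ≤ R :=
  inflight_set_finite_card_le_rob_size_general R decode retire h_dec_mono h_cap t
end
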